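/- Let n ≥ 2 be an integer and let G be a graph. If the graph semiring S_G satisfies the identity p_n ≈ c_n, then the length of every cycle of G divides n. -/

import Mathlib

universe u

-- The underlying set of the graph semiring of a graph with vertex set `V`:
-- the vertices together with two extra elements `0` and `ω`.
inductive GS (V : Type u) : Type u where
  | zero : GS V
  | omega : GS V
  | vert : V → GS V

-- Multiplication of the graph semiring: `x·y = ω` if `x, y` are vertices joined by an
-- edge, and `x·y = 0` otherwise.
open Classical in
noncomputable def gsMul {V : Type u} (E : V → V → Prop) : GS V → GS V → GS V
  | GS.vert a, GS.vert b => if E a b then GS.omega else GS.zero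
  | _, _ => GS.zero

-- The flat addition of the graph semiring: `a + b = a` if `a = b`, else `0`.
open Classical in
noncomputable def gsAdd {V : Type u} (a b : GS V) : GS V :=
  if a = b then a else GS.zero

-- `gsSum f n = f 0 + f 1 + ⋯ + f n` (a sum of `n + 1` terms).
noncomputable def gsSum {V : Type u} (f : ℕ → GS V) : ℕ → GS V
  | 0 => f 0
  | n + 1 => gsAdd (gsSum f n) (f (n + 1))

-- `E` is a graph (in the sense of the paper): a directed graph with no isolated
-- vertices in which every vertex has out-degree at most 1 and in-degree at most 1.
def IsGraph {V : Type u} (E : V → V → Prop) : Prop :=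
  (∀ v : V, ∃ u : V, E v u ∨ E u v) ∧
  (∀ v a b : V, E v a → E v b → a = b) ∧
  (∀ v a b : V, E a v → E b v → a = b)

-- `v 0, v 1, …, v (m - 1)` is a path of the graph `E` with `m` vertices.
def IsPathOn {V : Type u} (E : V → V → Prop) (m : ℕ) (v : ℕ → V) : Prop :=
  (∀ i < m, ∀ j < m, v i = v j → i = j) ∧
  (∀ i : ℕ, i + 1 < m → E (v i) (v (i + 1)))

-- `v 0, v 1, …, v (m - 1)` is a cycle of the graph `E` of length `m`.
def IsCycleOn {V : Type u} (E : V → V → Prop) (m : ℕ) (v : ℕ → V) : Prop :=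
  1 ≤ m ∧
  (∀ i < m, ∀ j < m, v i = v j → i = j) ∧
  (∀ i : ℕ, i + 1 < m → E (v i) (v (i + 1))) ∧
  E (v (m - 1)) (v 0)

-- The value of the term `p_n(x_1, …, x_n) = x_1x_2 + x_2x_3 + ⋯ + x_{n-1}x_n` in the
-- graph semiring, under the assignment `x_{i+1} ↦ g i` (for `n ≥ 2`).
noncomputable def pTerm {V : Type u} (E : V → V → Prop) (g : ℕ → GS V) (n : ℕ) : GS V :=
  gsSum (fun i => gsMul E (g i) (g (i + 1))) (n - 2)

-- The graph semiring of `E` satisfies the identity `p_n ≈ c_n`, i.e. for all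
-- `x_1, …, x_n`: `x_1x_2 + ⋯ + x_{n-1}x_n = x_1x_2 + ⋯ + x_{n-1}x_n + x_nx_1`.
def satPC {V : Type u} (E : V → V → Prop) (n : ℕ) : Prop :=
  ∀ g : ℕ → GS V,
    pTerm E g n = gsAdd (pTerm E g n) (gsMul E (g (n - 1)) (g 0))

/-!
Walk around an `m`-cycle `v` with the assignment `x_{i+1} := v (i mod m)`. Every monomial
`x_i x_{i+1}` of `p_n` is then `ω`, so `p_n = ω`, and `p_n ≈ c_n` forces `x_n x_1 = ω`: there is
an edge from `v ((n - 1) mod m)` to `v 0`. Since `v 0` has in-degree at most one and the cycle is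
injective, `(n - 1) mod m = m - 1`, i.e. `m ∣ n`.
-/

section GraphSemiring

variable {V : Type u}

lemma gsSum_eq_of_forall_eq {f : ℕ → GS V} {a : GS V} (h : ∀ i, f i = a) (k : ℕ) :
    gsSum f k = a := by
  induction k with
  | zero => exact h 0
  | succ k ih => simp [gsSum, gsAdd, ih, h (k + 1)]

lemma eq_of_eq_gsAdd {a b : GS V} (ha : a ≠ GS.zero) (h : a = gsAdd a b) : b = a := by
  unfold gsAdd at h
  split_ifs at h with hab
  · exact hab.symm
  · exact absurd h ha

lemma gsMul_vert_eq_omega_iff (E : V → V → Prop) {a b : V} :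
    gsMul E (.vert a) (.vert b) = .omega ↔ E a b := by
  by_cases hab : E a b <;> simp [gsMul, hab]

end GraphSemiring

namespace IsCycleOn

variable {V : Type u} {E : V → V → Prop} {m : ℕ} {v : ℕ → V}

lemma adj_mod (hc : IsCycleOn E m v) (i : ℕ) : E (v (i % m)) (v ((i + 1) % m)) := by
  obtain ⟨hm, -, hpath, hclose⟩ := hc
  have hlt : i % m < m := Nat.mod_lt i hm
  by_cases hlast : i % m + 1 < m
  · rw [Nat.add_mod_eq_add_mod_right 1 (Nat.mod_mod i m).symm, Nat.mod_eq_of_lt hlast]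
    exact hpath _ hlast
  · obtain ⟨k, rfl⟩ := Nat.exists_eq_add_of_le' hm
    have hi : i % (k + 1) = k := by omega
    rw [hi, Nat.succ_mod_succ_eq_zero_iff.2 hi]
    simpa using hclose

lemma dvd_succ_of_adj_mod (hc : IsCycleOn E m v) (hin : ∀ w a b : V, E a w → E b w → a = b)
    {k : ℕ} (hk : E (v (k % m)) (v 0)) : m ∣ k + 1 := by
  obtain ⟨hm, hinj, -, hclose⟩ := hc
  obtain ⟨l, rfl⟩ := Nat.exists_eq_add_of_le' hm
  have hk' : k % (l + 1) = l :=
    hinj _ (Nat.mod_lt k hm) _ (by omega) (by simpa using hin _ _ _ hk hclose)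
  exact Nat.dvd_of_mod_eq_zero (Nat.succ_mod_succ_eq_zero_iff.2 hk')

end IsCycleOn

theorem stmt_11_general {V : Type u} (E : V → V → Prop) (hG : IsGraph E)
    (n : ℕ) (hsat : satPC E n) :
    ∀ (m : ℕ) (v : ℕ → V), IsCycleOn E m v → m ∣ n := by
  intro m v hc
  set g : ℕ → GS V := fun i => .vert (v (i % m))
  have hp : pTerm E g n = .omega :=
    gsSum_eq_of_forall_eq (fun i => (gsMul_vert_eq_omega_iff E).2 (hc.adj_mod i)) _
  have hlast : gsMul E (g (n - 1)) (g 0) = .omega :=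
    eq_of_eq_gsAdd (by simp) (hp ▸ hsat g)
  have hadj : E (v ((n - 1) % m)) (v 0) := by
    simpa [g] using (gsMul_vert_eq_omega_iff E).1 hlast
  obtain rfl | hn := n.eq_zero_or_pos
  · exact dvd_zero m
  · simpa [Nat.sub_add_cancel hn] using hc.dvd_succ_of_adj_mod hG.2.2 hadj

/-- For `n ≥ 2`, if the graph semiring of a graph `E` satisfies
`p_n ≈ c_n`, then the length of every cycle of the graph divides `n`. -/
theorem stmt_11 {V : Type u} (E : V → V → Prop) (hG : IsGraph E)
    (n : ℕ) (hn : 2 ≤ n) (hsat : satPC E n) :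
    ∀ (m : ℕ) (v : ℕ → V), IsCycleOn E m v → m ∣ n :=
  stmt_11_general E hG n hsat
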